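/- arXiv:0809.3815 — 2 statements merged into one kernel-verified Lean document; each statement's English description precedes it below -/
import Mathlib

section
/- Let V be a variety and suppose (N = 2k, n, sᵢ, tᵢ, L_α, R_α) witness the BFC Mal'cev condition for V. Then V ⊨ Φ₂(x,x,z,w); that is, every algebra A in V and all a,c,d ∈ A satisfy A ⊨ Φ₂(a,a,c,d). -/
set_option linter.unusedVariables false

namespace UA

/-- A purely functional first-order signature (language). -/
structure Sig where
  ops : Type
  ar : ops → ℕ

/-- An algebra over a signature: a carrier together with interpretations of
the basic operations. -/
structure Alg (S : Sig) where
  carrier : Type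
  interp : ∀ f : S.ops, (Fin (S.ar f) → carrier) → carrier

/-- Terms over a signature, with variables in `V`. -/
inductive Tm (S : Sig) (V : Type) : Type
  | var : V → Tm S V
  | app : ∀ f : S.ops, (Fin (S.ar f) → Tm S V) → Tm S V

/-- Evaluation of a term in an algebra, under an assignment of the variables. -/
def Tm.eval {S : Sig} {V : Type} (A : Alg S) (v : V → A.carrier) : Tm S V → A.carrier
  | .var i => v i
  | .app f ts => A.interp f (fun i => Tm.eval A v (ts i))

/-- An algebra satisfies an identity (a universally quantified equation between
two terms in variables `ℕ`). -/
def Alg.satisfies {S : Sig} (A : Alg S) (e : Tm S ℕ × Tm S ℕ) : Prop :=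
  ∀ v : ℕ → A.carrier, Tm.eval A v e.1 = Tm.eval A v e.2

/-- Membership in the variety axiomatized by the set of equations `E`. -/
def InV {S : Sig} (E : Set (Tm S ℕ × Tm S ℕ)) (A : Alg S) : Prop :=
  ∀ e ∈ E, A.satisfies e

/-- A congruence of an algebra: an equivalence relation compatible with all
basic operations. -/
structure Con {S : Sig} (A : Alg S) where
  rel : A.carrier → A.carrier → Prop
  refl : ∀ a, rel a a
  symm : ∀ a b, rel a b → rel b a
  trans : ∀ a b c, rel a b → rel b c → rel a c
  compat : ∀ (f : S.ops) (ts us : Fin (S.ar f) → A.carrier),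
      (∀ i, rel (ts i) (us i)) → rel (A.interp f ts) (A.interp f us)

/-- The trivial (equality) congruence Δ. -/
def conDelta {S : Sig} (A : Alg S) : Con A where
  rel a b := a = b
  refl _ := rfl
  symm _ _ h := h.symm
  trans _ _ _ h₁ h₂ := h₁.trans h₂
  compat f ts us h := congrArg (A.interp f) (funext h)

/-- The total congruence ∇. -/
def conNabla {S : Sig} (A : Alg S) : Con A where
  rel _ _ := True
  refl _ := trivial
  symm _ _ _ := trivial
  trans _ _ _ _ _ := trivial
  compat _ _ _ _ := trivial

/-- The congruence generated by a set of pairs. -/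
def cg {S : Sig} {A : Alg S} (s : Set (A.carrier × A.carrier)) : Con A where
  rel a b := ∀ θ : Con A, (∀ p ∈ s, θ.rel p.1 p.2) → θ.rel a b
  refl a := fun θ _ => θ.refl a
  symm _ _ h := fun θ hs => θ.symm _ _ (h θ hs)
  trans _ _ _ h₁ h₂ := fun θ hs => θ.trans _ _ _ (h₁ θ hs) (h₂ θ hs)
  compat f ts us h := fun θ hs => θ.compat f ts us (fun i => h i θ hs)

/-- The principal congruence generated by a pair. -/
def cgPair {S : Sig} (A : Alg S) (a b : A.carrier) : Con A := cg {(a, b)}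

/-- Meet (intersection) in the congruence lattice. -/
def Con.inf {S : Sig} {A : Alg S} (θ φ : Con A) : Con A where
  rel a b := θ.rel a b ∧ φ.rel a b
  refl a := ⟨θ.refl a, φ.refl a⟩
  symm _ _ h := ⟨θ.symm _ _ h.1, φ.symm _ _ h.2⟩
  trans _ _ _ h₁ h₂ := ⟨θ.trans _ _ _ h₁.1 h₂.1, φ.trans _ _ _ h₁.2 h₂.2⟩
  compat f ts us h :=
    ⟨θ.compat f ts us fun i => (h i).1, φ.compat f ts us fun i => (h i).2⟩

/-- Join in the congruence lattice. -/
def Con.sup {S : Sig} {A : Alg S} (θ φ : Con A) : Con A :=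
  cg {p | θ.rel p.1 p.2 ∨ φ.rel p.1 p.2}

/-- Join of a family in the congruence lattice. -/
def Con.iSup {S : Sig} {A : Alg S} {ι : Type} (f : ι → Con A) : Con A :=
  cg {p | ∃ i, (f i).rel p.1 p.2}

/-- Inclusion of congruences. -/
def conLE {S : Sig} {A : Alg S} (θ φ : Con A) : Prop := ∀ a b, θ.rel a b → φ.rel a b

/-- Relational composition `r ∘ s`. -/
def relComp {α : Type} (r s : α → α → Prop) : α → α → Prop :=
  fun a b => ∃ c, r a c ∧ s c b

/-- `θ` and `θs` are complementary factor congruences: θ ∩ θ* = Δ and θ ∘ θ* = ∇. -/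
def AreCompFC {S : Sig} {A : Alg S} (θ θs : Con A) : Prop :=
  (∀ a b, θ.rel a b → θs.rel a b → a = b) ∧ (∀ a b, relComp θ.rel θs.rel a b)

/-- The set of factor congruences of an algebra. -/
def FC {S : Sig} (A : Alg S) : Set (Con A) := {θ | ∃ θs, AreCompFC θ θs}

/-- `FC(A)` is a distributive sublattice of `Con(A)`. -/
def HasBFC {S : Sig} (A : Alg S) : Prop :=
  (∀ θ φ, θ ∈ FC A → φ ∈ FC A → θ.inf φ ∈ FC A) ∧
  (∀ θ φ, θ ∈ FC A → φ ∈ FC A → θ.sup φ ∈ FC A) ∧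
  (∀ θ φ ψ, θ ∈ FC A → φ ∈ FC A → ψ ∈ FC A →
    θ.inf (φ.sup ψ) = (θ.inf φ).sup (θ.inf ψ))

/-- The variety axiomatized by `E` has Boolean factor congruences. -/
def BFC {S : Sig} (E : Set (Tm S ℕ × Tm S ℕ)) : Prop :=
  ∀ A : Alg S, InV E A → HasBFC A

/-- Direct product of two algebras. -/
def Alg.prod {S : Sig} (A B : Alg S) : Alg S where
  carrier := A.carrier × B.carrier
  interp f xs := (A.interp f (fun i => (xs i).1), B.interp f (fun i => (xs i).2))

/-- Direct product of a family of algebras. -/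
def Alg.pi {S : Sig} {ι : Type} (A : ι → Alg S) : Alg S where
  carrier := ∀ i, (A i).carrier
  interp f xs i := (A i).interp f (fun j => (xs j) i)

/-- First-order formulas over a purely functional signature, with `k` free
variables (de Bruijn style: `all` binds a new last variable).  Negation,
conjunction, disjunction and existential quantification are definable from
`falsum`, `imp` and `all`, so this captures full first-order logic. -/
inductive Fml (S : Sig) : ℕ → Type
  | eq {k : ℕ} : Tm S (Fin k) → Tm S (Fin k) → Fml S k
  | falsum {k : ℕ} : Fml S k
  | imp {k : ℕ} : Fml S k → Fml S k → Fml S k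
  | all {k : ℕ} : Fml S (k + 1) → Fml S k

/-- Tarskian satisfaction of a first-order formula in an algebra. -/
def Fml.realize {S : Sig} (A : Alg S) : ∀ {k : ℕ}, Fml S k → (Fin k → A.carrier) → Prop
  | _, .eq t u, v => Tm.eval A v t = Tm.eval A v u
  | _, .falsum, _ => False
  | _, .imp f g, v => Fml.realize A f v → Fml.realize A g v
  | _, .all f, v => ∀ a : A.carrier, Fml.realize A f (Fin.snoc v a)

/-- A formula is preserved by direct products. -/
def PreservedByProducts {S : Sig} {l : ℕ} (φ : Fml S l) : Prop :=
  ∀ (ι : Type) (A : ι → Alg S) (v : Fin l → (Alg.pi A).carrier),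
    (∀ i, φ.realize (A i) (fun m => v m i)) → φ.realize (Alg.pi A) v

/-- A formula is preserved by direct factors. -/
def PreservedByFactors {S : Sig} {l : ℕ} (φ : Fml S l) : Prop :=
  ∀ (A B : Alg S) (v : Fin l → (A.prod B).carrier),
    φ.realize (A.prod B) v →
      φ.realize A (fun m => (v m).1) ∧ φ.realize B (fun m => (v m).2)

/-! ### Tuples `(x, y, z, w, x₁, y₁, …, xₙ, yₙ)` and the maps σ, σ*, ρ, ρ* -/

/-- The tuple `(x, y, z, w, x₁, y₁, x₂, y₂, …)` as an assignment of variables: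
variable `0 ↦ x`, `1 ↦ y`, `2 ↦ z`, `3 ↦ w`, `4 + 2m ↦ xs m`, `5 + 2m ↦ ys m`. -/
def tup {α : Type} (x y z w : α) (xs ys : ℕ → α) : ℕ → α
  | 0 => x
  | 1 => y
  | 2 => z
  | 3 => w
  | m + 4 => if m % 2 = 0 then xs (m / 2) else ys (m / 2)

/-- Extend a tuple `Fin n → α` to all of `ℕ` by a default value. -/
def extN {α : Type} {n : ℕ} (dflt : α) (f : Fin n → α) : ℕ → α :=
  fun m => if h : m < n then f ⟨m, h⟩ else dflt

/-- Evaluate a term of arity `m` at (the first `m` entries of) a tuple. -/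
def evalAt {S : Sig} (A : Alg S) {m : ℕ} (u : Tm S (Fin m)) (X : ℕ → A.carrier) :
    A.carrier :=
  Tm.eval A (fun i => X i.val) u

/-- The set of pairs of corresponding components of two tuples of length `len`;
`Cg(X⃗, Y⃗)` is `cg (tupPairs X Y len)`. -/
def tupPairs {α : Type} (X Y : ℕ → α) (len : ℕ) : Set (α × α) :=
  {p | ∃ m, m < len ∧ p = (X m, Y m)}

/-- The recursively computed `x`-row: `row j = (u j)(h1,h2,h3,h4,row 0,ys 0,…,
row (j-1), ys (j-1))`.  `recRowX A u h1 h2 h3 h4 ys j m` is the value of the row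
at index `m`, computed after `j` recursion steps (only the values at `m < j`
are meaningful; later steps never change them). -/
def recRowX {S : Sig} (A : Alg S) {n : ℕ} (u : ∀ j : Fin n, Tm S (Fin (4 + 2 * j.val)))
    (h1 h2 h3 h4 : A.carrier) (ys : ℕ → A.carrier) : ℕ → ℕ → A.carrier
  | 0, _ => h1
  | j + 1, m =>
    if m = j then
      if h : j < n then
        Tm.eval A (fun i => tup h1 h2 h3 h4 (recRowX A u h1 h2 h3 h4 ys j) ys i.val)
          (u ⟨j, h⟩)
      else h1
    else recRowX A u h1 h2 h3 h4 ys j m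

/-- The recursively computed `y`-row (the `x`-row being fixed). -/
def recRowY {S : Sig} (A : Alg S) {n : ℕ} (u : ∀ j : Fin n, Tm S (Fin (4 + 2 * j.val)))
    (h1 h2 h3 h4 : A.carrier) (xs : ℕ → A.carrier) : ℕ → ℕ → A.carrier
  | 0, _ => h1
  | j + 1, m =>
    if m = j then
      if h : j < n then
        Tm.eval A (fun i => tup h1 h2 h3 h4 xs (recRowY A u h1 h2 h3 h4 xs j) i.val)
          (u ⟨j, h⟩)
      else h1
    else recRowY A u h1 h2 h3 h4 xs j m

/-- The tuple `σ(X⃗)`: heads `(x, y, x, y)`, `y`-row unchanged, `x`-row computed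
recursively by the terms `s`. -/
def sigmaT {S : Sig} (A : Alg S) {n : ℕ} (s : ∀ j : Fin n, Tm S (Fin (4 + 2 * j.val)))
    (x y z w : A.carrier) (xs ys : ℕ → A.carrier) : ℕ → A.carrier :=
  tup x y x y (recRowX A s x y x y ys n) ys

/-- The tuple `σ*(X⃗)`: heads `(x, x, z, w)`, `y`-row unchanged, `x`-row computed
recursively by the terms `t`. -/
def sigmaStarT {S : Sig} (A : Alg S) {n : ℕ} (t : ∀ j : Fin n, Tm S (Fin (4 + 2 * j.val)))
    (x y z w : A.carrier) (xs ys : ℕ → A.carrier) : ℕ → A.carrier :=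
  tup x x z w (recRowX A t x x z w ys n) ys

/-- The tuple `ρ(X⃗)`: heads `(x, y, z, z)`, `x`-row unchanged, `y`-row computed
recursively by the terms `s`. -/
def rhoT {S : Sig} (A : Alg S) {n : ℕ} (s : ∀ j : Fin n, Tm S (Fin (4 + 2 * j.val)))
    (x y z w : A.carrier) (xs ys : ℕ → A.carrier) : ℕ → A.carrier :=
  tup x y z z xs (recRowY A s x y z z xs n)

/-- The tuple `ρ*(X⃗)`: heads `(x, y, z, w)`, `x`-row unchanged, `y`-row computed
recursively by the terms `t`. -/
def rhoStarT {S : Sig} (A : Alg S) {n : ℕ} (t : ∀ j : Fin n, Tm S (Fin (4 + 2 * j.val)))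
    (x y z w : A.carrier) (xs ys : ℕ → A.carrier) : ℕ → A.carrier :=
  tup x y z w xs (recRowY A t x y z w xs n)

/-- The pair of relations `(δ_m, ε_m)` determined by congruences θ, θ*, φ, φ*:
`δ₀ = ε₀ = Δ`, `δ_{m+1} = (θ ∘ ε_m) ∩ (θ* ∘ ε_m)`,
`ε_{m+1} = (φ ∘ δ_m) ∩ (φ* ∘ δ_m)`. -/
def deltaEps {S : Sig} {A : Alg S} (θ θs φ φs : Con A) :
    ℕ → (A.carrier → A.carrier → Prop) × (A.carrier → A.carrier → Prop)
  | 0 => (Eq, Eq)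
  | m + 1 =>
    let p := deltaEps θ θs φ φs m
    (fun a b => relComp θ.rel p.2 a b ∧ relComp θs.rel p.2 a b,
     fun a b => relComp φ.rel p.1 a b ∧ relComp φs.rel p.1 a b)

/-- Willard's congruence-theoretic condition (Corollary on Willard terms): for
every algebra in the variety, all congruences θ, θ*, φ, φ* and every tuple, if
`Cg(X⃗,σ(X⃗)) ⊆ θ`, `Cg(X⃗,σ*(X⃗)) ⊆ θ*`, `Cg(X⃗,ρ(X⃗)) ⊆ φ` and
`Cg(X⃗,ρ*(X⃗)) ⊆ φ*` then `(x, y) ∈ φ ∘ δ_N`. -/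
def MalcevRelCondition {S : Sig} (E : Set (Tm S ℕ × Tm S ℕ)) (N n : ℕ)
    (s t : ∀ j : Fin n, Tm S (Fin (4 + 2 * j.val))) : Prop :=
  ∀ A : Alg S, InV E A → ∀ θ θs φ φs : Con A,
    ∀ x y z w : A.carrier, ∀ xs ys : Fin n → A.carrier,
      conLE (cg (tupPairs (tup x y z w (extN x xs) (extN x ys))
        (sigmaT A s x y z w (extN x xs) (extN x ys)) (4 + 2 * n))) θ →
      conLE (cg (tupPairs (tup x y z w (extN x xs) (extN x ys))
        (sigmaStarT A t x y z w (extN x xs) (extN x ys)) (4 + 2 * n))) θs →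
      conLE (cg (tupPairs (tup x y z w (extN x xs) (extN x ys))
        (rhoT A s x y z w (extN x xs) (extN x ys)) (4 + 2 * n))) φ →
      conLE (cg (tupPairs (tup x y z w (extN x xs) (extN x ys))
        (rhoStarT A t x y z w (extN x xs) (extN x ys)) (4 + 2 * n))) φs →
      relComp φ.rel (deltaEps θ θs φ φs N).1 x y

/-! ### The Mal'cev condition for BFC: words and the terms `L_α`, `R_α` -/

/-- A word over the alphabet `{1, …, N}`. -/
def IsWord (N : ℕ) (α : List ℕ) : Prop := ∀ j ∈ α, 1 ≤ j ∧ j ≤ N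

/-- The chain of identities associated with a word `α` (with `N = 2k`) and a
pair of tuples `Y` and `Ys` (which will be `ρ(X⃗), ρ*(X⃗)` or `σ(X⃗), σ*(X⃗)`). -/
def ChainCond {S : Sig} (A : Alg S) {n : ℕ} (k : ℕ)
    (L R : List ℕ → Tm S (Fin (4 + 2 * n))) (α : List ℕ)
    (Y Ys : ℕ → A.carrier) : Prop :=
  evalAt A (L α) Y = evalAt A (L (α ++ [1])) Y ∧
  (∀ j, 1 ≤ j → j ≤ k - 1 →
    evalAt A (R (α ++ [j])) Y = evalAt A (L (α ++ [j + 1])) Y) ∧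
  evalAt A (R (α ++ [k])) Y = evalAt A (R α) Y ∧
  evalAt A (L α) Ys = evalAt A (L (α ++ [k + 1])) Ys ∧
  (∀ j, k + 1 ≤ j → j ≤ 2 * k - 1 →
    evalAt A (R (α ++ [j])) Ys = evalAt A (L (α ++ [j + 1])) Ys) ∧
  evalAt A (R (α ++ [2 * k])) Ys = evalAt A (R α) Ys

/-- `(N = 2k, n, s, t, L, R)` witness the BFC Mal'cev condition for the variety
axiomatized by `E`. -/
def MalcevWitness {S : Sig} (E : Set (Tm S ℕ × Tm S ℕ)) (k n : ℕ)
    (s t : ∀ j : Fin n, Tm S (Fin (4 + 2 * j.val)))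
    (L R : List ℕ → Tm S (Fin (4 + 2 * n))) : Prop :=
  0 < k ∧ 0 < n ∧
  ∀ A : Alg S, InV E A → ∀ (x y z w : A.carrier) (xs ys : ℕ → A.carrier),
    (∀ α : List ℕ, IsWord (2 * k) α → α.length = 2 * k →
      evalAt A (L α) (rhoT A s x y z w xs ys) =
        evalAt A (R α) (rhoT A s x y z w xs ys) ∧
      evalAt A (L α) (rhoStarT A t x y z w xs ys) =
        evalAt A (R α) (rhoStarT A t x y z w xs ys)) ∧
    (x = evalAt A (L []) (tup x y z w xs ys)) ∧
    (y = evalAt A (R []) (tup x y z w xs ys)) ∧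
    (evalAt A (L []) (rhoT A s x y z w xs ys) =
      evalAt A (L [1]) (rhoT A s x y z w xs ys)) ∧
    (∀ j, 1 ≤ j → j ≤ 2 * k - 1 →
      evalAt A (R [j]) (rhoT A s x y z w xs ys) =
        evalAt A (L [j + 1]) (rhoT A s x y z w xs ys)) ∧
    (evalAt A (R [2 * k]) (rhoT A s x y z w xs ys) =
      evalAt A (R []) (rhoT A s x y z w xs ys)) ∧
    (∀ α : List ℕ, IsWord (2 * k) α → α ≠ [] → α.length < 2 * k →
      α.length % 2 = 0 →
      ChainCond A k L R α (rhoT A s x y z w xs ys) (rhoStarT A t x y z w xs ys)) ∧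
    (∀ α : List ℕ, IsWord (2 * k) α → α ≠ [] → α.length < 2 * k →
      α.length % 2 = 1 →
      ChainCond A k L R α (sigmaT A s x y z w xs ys) (sigmaStarT A t x y z w xs ys))

/-! ### The formulas Ψ_m, Φ₁ and Φ₂ -/

/-- Alternating quantifier prefix `∃ u₁ ∀ v₁ … ∃ uₘ ∀ vₘ, P [u₁, v₁, …, uₘ, vₘ]`
(the accumulator collects the quantified elements in order). -/
def altQ {α : Type} (P : List α → Prop) : ℕ → List α → Prop
  | 0, acc => P acc
  | m + 1, acc => ∃ u : α, ∀ v : α, altQ P m (acc ++ [u, v])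

/-- The (realization of the) formula `Ψ_m`: for every word `α` of length `m`,
if `L_{αγ} = R_{αγ}` for all nonempty `γ` with `|αγ| ≤ N`, then `L_α = R_α`. -/
def Psi {S : Sig} (A : Alg S) {n : ℕ} (N : ℕ)
    (L R : List ℕ → Tm S (Fin (4 + 2 * n))) (m : ℕ) (X : ℕ → A.carrier) : Prop :=
  ∀ α : List ℕ, IsWord N α → α.length = m →
    ((∀ γ : List ℕ, IsWord N γ → γ ≠ [] → (α ++ γ).length ≤ N →
        evalAt A (L (α ++ γ)) X = evalAt A (R (α ++ γ)) X) →
      evalAt A (L α) X = evalAt A (R α) X)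

/-- Realization of `Φ₁(x,y,z,w) = ∃y₁∀x₁ ⋯ ∃yₙ∀xₙ ⋀_{m=1}^{k} Ψ_{2m}`. -/
def Phi1 {S : Sig} (A : Alg S) (k n : ℕ)
    (L R : List ℕ → Tm S (Fin (4 + 2 * n))) (x y z w : A.carrier) : Prop :=
  altQ (fun acc =>
    ∀ m, 1 ≤ m → m ≤ k →
      Psi A (2 * k) L R (2 * m)
        (tup x y z w (fun i => acc.getD (2 * i + 1) x) (fun i => acc.getD (2 * i) x)))
    n []

/-- Realization of `Φ₂(x,y,z,w) = ∃x₁∀y₁ ⋯ ∃xₙ∀yₙ ⋀_{m=1}^{k} Ψ_{2m-1}`. -/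
def Phi2 {S : Sig} (A : Alg S) (k n : ℕ)
    (L R : List ℕ → Tm S (Fin (4 + 2 * n))) (x y z w : A.carrier) : Prop :=
  altQ (fun acc =>
    ∀ m, 1 ≤ m → m ≤ k →
      Psi A (2 * k) L R (2 * m - 1)
        (tup x y z w (fun i => acc.getD (2 * i) x) (fun i => acc.getD (2 * i + 1) x)))
    n []

/-- `Γ^A(a,b,c,d)`: every factor congruence containing `(c,d)` contains `(a,b)`. -/
def Gamma {S : Sig} (A : Alg S) (a b c d : A.carrier) : Prop :=
  ∀ θ ∈ FC A, θ.rel c d → θ.rel a b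



/-! ### Auxiliary lemmas for `statement12` -/

lemma evalAt_congr' {S : Sig} (A : Alg S) {m : ℕ} (u : Tm S (Fin m)) {X Y : ℕ → A.carrier}
    (h : ∀ i, i < m → X i = Y i) : evalAt A u X = evalAt A u Y := by
  unfold evalAt
  congr 1
  funext i
  exact h i.val i.isLt

lemma recRowX_succ' {S : Sig} (A : Alg S) {n : ℕ}
    (u : ∀ j : Fin n, Tm S (Fin (4 + 2 * j.val))) (h1 h2 h3 h4 : A.carrier)
    (ys : ℕ → A.carrier) (j m : ℕ) :
    recRowX A u h1 h2 h3 h4 ys (j + 1) m =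
      if m = j then
        (if h : j < n then
          Tm.eval A (fun i => tup h1 h2 h3 h4 (recRowX A u h1 h2 h3 h4 ys j) ys i.val)
            (u ⟨j, h⟩)
        else h1)
      else recRowX A u h1 h2 h3 h4 ys j m := rfl

lemma recRowX_congr' {S : Sig} (A : Alg S) {n : ℕ}
    (u : ∀ j : Fin n, Tm S (Fin (4 + 2 * j.val))) (h1 h2 h3 h4 : A.carrier) :
    ∀ (j : ℕ) (ys ys' : ℕ → A.carrier), (∀ i, i + 1 < j → ys i = ys' i) →
      ∀ m, recRowX A u h1 h2 h3 h4 ys j m = recRowX A u h1 h2 h3 h4 ys' j m := by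
  intro j
  induction j with
  | zero => intro ys ys' h m; rfl
  | succ j ih =>
    intro ys ys' h m
    rw [recRowX_succ', recRowX_succ']
    by_cases hm : m = j
    · simp only [hm, if_pos rfl]
      by_cases hj : j < n
      · simp only [dif_pos hj]
        refine congrArg (fun v => Tm.eval A v (u ⟨j, hj⟩)) (funext fun i => ?_)
        rcases i with ⟨iv, hiv⟩
        match iv, hiv with
        | 0, _ => rfl
        | 1, _ => rfl
        | 2, _ => rfl
        | 3, _ => rfl
        | (p+4), hp =>
          show tup h1 h2 h3 h4 (recRowX A u h1 h2 h3 h4 ys j) ys (p + 4)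
             = tup h1 h2 h3 h4 (recRowX A u h1 h2 h3 h4 ys' j) ys' (p + 4)
          simp only [tup]
          split_ifs with hpar
          · exact ih ys ys' (fun i hi => h i (by omega)) (p / 2)
          · exact h (p / 2) (by omega)
      · simp [hj]
    · simp only [if_neg hm]
      exact ih ys ys' (fun i hi => h i (by omega)) m

lemma recRowX_stable' {S : Sig} (A : Alg S) {n : ℕ}
    (u : ∀ j : Fin n, Tm S (Fin (4 + 2 * j.val))) (h1 h2 h3 h4 : A.carrier)
    (ys : ℕ → A.carrier) :
    ∀ (j m : ℕ), m < j →
      recRowX A u h1 h2 h3 h4 ys j m = recRowX A u h1 h2 h3 h4 ys (m + 1) m := by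
  intro j
  induction j with
  | zero => intro m hm; omega
  | succ j ih =>
    intro m hm
    by_cases h : m = j
    · subst h; rfl
    · rw [recRowX_succ', if_neg h]
      exact ih m (by omega)

lemma psi_odd' {S : Sig} {n : ℕ} (k : ℕ) (hk : 0 < k) (A : Alg S)
    (s t : ∀ j : Fin n, Tm S (Fin (4 + 2 * j.val)))
    (L R : List ℕ → Tm S (Fin (4 + 2 * n)))
    (a c d : A.carrier) (xs ys : ℕ → A.carrier)
    (hchain : ∀ α : List ℕ, IsWord (2 * k) α → α ≠ [] → α.length < 2 * k →
      α.length % 2 = 1 →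
      ChainCond A k L R α (sigmaT A s a a c d xs ys) (sigmaStarT A t a a c d xs ys))
    (hxs : ∀ i, i < n → xs i = recRowX A t a a c d ys n i) :
    ∀ m, 1 ≤ m → m ≤ k → Psi A (2 * k) L R (2 * m - 1) (tup a a c d xs ys) := by
  intro m hm1 hmk α hword hlen Hant
  have hXY : ∀ u : Tm S (Fin (4 + 2 * n)),
      evalAt A u (sigmaStarT A t a a c d xs ys) = evalAt A u (tup a a c d xs ys) := by
    intro u
    apply evalAt_congr'
    intro i hi
    show tup a a c d (recRowX A t a a c d ys n) ys i = tup a a c d xs ys i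
    match i, hi with
    | 0, _ => rfl
    | 1, _ => rfl
    | 2, _ => rfl
    | 3, _ => rfl
    | (p+4), hp =>
      simp only [tup]
      split_ifs with hpar
      · exact (hxs (p / 2) (by omega)).symm
      · rfl
  have hne : α ≠ [] := by
    intro h; rw [h] at hlen; simp at hlen; omega
  obtain ⟨-, -, -, c4, c5, c6⟩ := hchain α hword hne (by omega) (by omega)
  simp only [hXY] at c4 c5 c6
  have hsingle : ∀ j, 1 ≤ j → j ≤ 2 * k →
      evalAt A (L (α ++ [j])) (tup a a c d xs ys)
        = evalAt A (R (α ++ [j])) (tup a a c d xs ys) := by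
    intro j hj1 hj2
    apply Hant [j]
    · intro x hx; simp at hx; omega
    · simp
    · simp only [List.length_append, List.length_singleton]; omega
  have key : ∀ dd, dd ≤ k - 1 →
      evalAt A (R (α ++ [2 * k - dd])) (tup a a c d xs ys)
        = evalAt A (R α) (tup a a c d xs ys) := by
    intro dd
    induction dd with
    | zero => intro _; simpa using c6
    | succ dd ih =>
      intro hdd
      have e1 := c5 (2 * k - (dd + 1)) (by omega) (by omega)
      have e2 : 2 * k - (dd + 1) + 1 = 2 * k - dd := by omega
      rw [e1, e2, hsingle (2 * k - dd) (by omega) (by omega)]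
      exact ih (by omega)
  have hfin : k + 1 = 2 * k - (k - 1) := by omega
  calc evalAt A (L α) (tup a a c d xs ys)
      = evalAt A (L (α ++ [k + 1])) (tup a a c d xs ys) := c4
    _ = evalAt A (R (α ++ [k + 1])) (tup a a c d xs ys) :=
        hsingle (k + 1) (by omega) (by omega)
    _ = evalAt A (R α) (tup a a c d xs ys) := by
        rw [hfin]; exact key (k - 1) (by omega)

lemma game' {S : Sig} (A : Alg S) {n : ℕ}
    (t : ∀ j : Fin n, Tm S (Fin (4 + 2 * j.val))) (a c d : A.carrier)
    (P : List A.carrier → Prop)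
    (hP : ∀ acc : List A.carrier, acc.length = 2 * n →
      (∀ i, i < n → acc.getD (2 * i) a
        = recRowX A t a a c d (fun i' => acc.getD (2 * i' + 1) a) n i) → P acc) :
    ∀ j (acc : List A.carrier), j ≤ n → acc.length = 2 * (n - j) →
      (∀ i, i < n - j → acc.getD (2 * i) a
        = recRowX A t a a c d (fun i' => acc.getD (2 * i' + 1) a) n i) →
      altQ P j acc := by
  intro j
  induction j with
  | zero =>
    intro acc hj hlen hinv
    exact hP acc (by omega) (fun i hi => hinv i (by omega))
  | succ j ih =>
    intro acc hj hlen hinv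
    refine ⟨recRowX A t a a c d (fun i' => acc.getD (2 * i' + 1) a) n (n - (j + 1)), ?_⟩
    intro v
    set p := n - (j + 1) with hp
    set u := recRowX A t a a c d (fun i' => acc.getD (2 * i' + 1) a) n p with hu
    apply ih (acc ++ [u, v]) (by omega)
      (by simp only [List.length_append, hlen]; simp; omega)
    intro i hi
    have hlenacc : acc.length = 2 * p := by omega
    have hagree : ∀ i', i' < p →
        (acc ++ [u, v]).getD (2 * i' + 1) a = acc.getD (2 * i' + 1) a := by
      intro i' hi'
      exact List.getD_append _ _ _ _ (by omega)
    have hrow : ∀ i0, i0 < n → i0 ≤ p →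
        recRowX A t a a c d (fun i' => (acc ++ [u, v]).getD (2 * i' + 1) a) n i0
          = recRowX A t a a c d (fun i' => acc.getD (2 * i' + 1) a) n i0 := by
      intro i0 h1 h2
      calc recRowX A t a a c d (fun i' => (acc ++ [u, v]).getD (2 * i' + 1) a) n i0
          = recRowX A t a a c d (fun i' => (acc ++ [u, v]).getD (2 * i' + 1) a) (i0 + 1) i0 :=
            recRowX_stable' A t a a c d _ n i0 h1
        _ = recRowX A t a a c d (fun i' => acc.getD (2 * i' + 1) a) (i0 + 1) i0 :=
            recRowX_congr' A t a a c d (i0 + 1) _ _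
              (fun i' hi' => hagree i' (by omega)) i0
        _ = recRowX A t a a c d (fun i' => acc.getD (2 * i' + 1) a) n i0 :=
            (recRowX_stable' A t a a c d _ n i0 h1).symm
    by_cases hip : i < p
    · rw [List.getD_append _ _ _ _ (by omega), hrow i (by omega) (by omega)]
      exact hinv i (by omega)
    · have hie : i = p := by omega
      have hgu : (acc ++ [u, v]).getD (2 * i) a = u := by
        rw [List.getD_append_right _ _ _ _ (by omega)]
        have h0 : 2 * i - acc.length = 0 := by omega
        rw [h0]
        rfl
      rw [hgu, hrow i (by omega) (by omega), hie]

/-- **Lemma.**  If `(N = 2k, n, sᵢ, tᵢ, L_α, R_α)` witness the BFC Mal'cev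
condition for the variety, then `V ⊨ Φ₂(x,x,z,w)`. -/
theorem statement12 {S : Sig} (E : Set (Tm S ℕ × Tm S ℕ)) (k n : ℕ)
    (s t : ∀ j : Fin n, Tm S (Fin (4 + 2 * j.val)))
    (L R : List ℕ → Tm S (Fin (4 + 2 * n)))
    (hW : MalcevWitness E k n s t L R) :
    ∀ A : Alg S, InV E A → ∀ a c d : A.carrier, Phi2 A k n L R a a c d := by
  intro A hA a c d
  obtain ⟨hk, hn, hmain⟩ := hW
  unfold Phi2
  apply game' A t a c d _ _ n [] le_rfl (by simp) (by intro i hi; omega)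
  intro acc hlenacc hinv m hm1 hmk
  exact psi_odd' k hk A s t L R a c d
    (fun i => acc.getD (2 * i) a) (fun i => acc.getD (2 * i + 1) a)
    (fun α h1 h2 h3 h4 =>
      ((hmain A hA a a c d (fun i => acc.getD (2 * i) a)
        (fun i => acc.getD (2 * i + 1) a)).2.2.2.2.2.2.2) α h1 h2 h3 h4)
    hinv m hm1 hmk

end UA
end

section
/- Let V be a variety and suppose (N = 2k, n, sᵢ, tᵢ, L_α, R_α) witness the BFC Mal'cev condition for V. If A ∈ V and a,b,c ∈ A satisfy A ⊨ Φ₂(a,b,c,c), then a = b. -/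
set_option linter.unusedVariables false

namespace UA

section Aux
variable {S : Sig} (A : Alg S) {n : ℕ} (u : ∀ j : Fin n, Tm S (Fin (4 + 2 * j.val)))
  (h1 h2 h3 h4 : A.carrier)

lemma recRowY_ge (xs : ℕ → A.carrier) : ∀ j m, j ≤ m → recRowY A u h1 h2 h3 h4 xs j m = h1 := by
  intro j
  induction j with
  | zero => intro m _; rfl
  | succ j ih =>
    intro m hm
    simp only [recRowY]
    rw [if_neg (by omega)]
    exact ih m (by omega)

lemma recRowY_stab (xs : ℕ → A.carrier) :
    ∀ j m, m < j → recRowY A u h1 h2 h3 h4 xs j m = recRowY A u h1 h2 h3 h4 xs (m + 1) m := by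
  intro j
  induction j with
  | zero => intro m hm; omega
  | succ j ih =>
    intro m hm
    by_cases hmj : m = j
    · subst hmj; rfl
    · have hmj' : m < j := by omega
      calc recRowY A u h1 h2 h3 h4 xs (j + 1) m
          = recRowY A u h1 h2 h3 h4 xs j m := by
            simp only [recRowY]; rw [if_neg hmj]
        _ = recRowY A u h1 h2 h3 h4 xs (m + 1) m := ih m hmj'

lemma recRowY_ext (xs xs' : ℕ → A.carrier) :
    ∀ m, (∀ i, i < m → xs i = xs' i) →
      recRowY A u h1 h2 h3 h4 xs (m + 1) m = recRowY A u h1 h2 h3 h4 xs' (m + 1) m := by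
  intro m
  induction m using Nat.strong_induction_on with
  | _ m ih =>
    intro hagree
    simp only [recRowY, if_pos rfl]
    by_cases hmn : m < n
    · rw [dif_pos hmn, dif_pos hmn]
      have hv : (fun i : Fin (4 + 2 * m) =>
            tup h1 h2 h3 h4 xs (recRowY A u h1 h2 h3 h4 xs m) i.val) =
          (fun i : Fin (4 + 2 * m) =>
            tup h1 h2 h3 h4 xs' (recRowY A u h1 h2 h3 h4 xs' m) i.val) := by
        funext i
        obtain ⟨iv, hiv⟩ := i
        rcases iv with _|_|_|_|q
        · rfl
        · rfl
        · rfl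
        · rfl
        · show (if q % 2 = 0 then xs (q / 2) else recRowY A u h1 h2 h3 h4 xs m (q / 2)) =
            (if q % 2 = 0 then xs' (q / 2) else recRowY A u h1 h2 h3 h4 xs' m (q / 2))
          by_cases hq2 : q % 2 = 0
          · rw [if_pos hq2, if_pos hq2]
            exact hagree _ (by omega)
          · rw [if_neg hq2, if_neg hq2]
            have hlt : q / 2 < m := by omega
            rw [recRowY_stab A u h1 h2 h3 h4 xs m (q / 2) hlt,
              recRowY_stab A u h1 h2 h3 h4 xs' m (q / 2) hlt]
            exact ih (q / 2) hlt (fun i hi => hagree i (by omega))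
      rw [hv]
      simp
    · rw [dif_neg hmn, dif_neg hmn]
      simp

lemma recRowY_dep (xs xs' : ℕ → A.carrier) (i : ℕ)
    (h : ∀ i', i' < i → xs i' = xs' i') :
    recRowY A u h1 h2 h3 h4 xs n i = recRowY A u h1 h2 h3 h4 xs' n i := by
  by_cases hi : i < n
  · rw [recRowY_stab A u h1 h2 h3 h4 xs n i hi, recRowY_stab A u h1 h2 h3 h4 xs' n i hi]
    exact recRowY_ext A u h1 h2 h3 h4 xs xs' i h
  · rw [recRowY_ge A u h1 h2 h3 h4 xs n i (by omega),
      recRowY_ge A u h1 h2 h3 h4 xs' n i (by omega)]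

end Aux

lemma tup_congr {α : Type} (x y z w : α) (xs ys xs' ys' : ℕ → α)
    (hxs : ∀ i, xs i = xs' i) (hys : ∀ i, ys i = ys' i) :
    tup x y z w xs ys = tup x y z w xs' ys' := by
  funext m
  rcases m with _|_|_|_|q
  · rfl
  · rfl
  · rfl
  · rfl
  · show (if q % 2 = 0 then xs (q / 2) else ys (q / 2)) =
      (if q % 2 = 0 then xs' (q / 2) else ys' (q / 2))
    split
    · exact hxs _
    · exact hys _

lemma getD_of_prefix {α : Type} {l l' : List α} (h : l <+: l') {i : ℕ} (d : α)
    (hi : i < l.length) : l'.getD i d = l.getD i d := by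
  obtain ⟨t, rfl⟩ := h
  exact List.getD_append l t d i hi

lemma altQ_extract {α : Type} (P : List α → Prop) (d : α) (W : (ℕ → α) → ℕ → α)
    (hWdep : ∀ xs xs' i, (∀ i', i' < i → xs i' = xs' i') → W xs i = W xs' i) :
    ∀ (m r : ℕ) (acc : List α), acc.length = 2 * r → altQ P m acc →
    ∃ cl : List α, acc <+: cl ∧ cl.length = 2 * (r + m) ∧ P cl ∧
      ∀ i, r ≤ i → i < r + m →
        cl.getD (2 * i + 1) d = W (fun i' => cl.getD (2 * i') d) i := by
  intro m
  induction m with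
  | zero =>
    intro r acc hlen hQ
    exact ⟨acc, List.prefix_refl _, by omega, hQ, fun i hi1 hi2 => absurd hi2 (by omega)⟩
  | succ m ih =>
    intro r acc hlen hQ
    have hQ' : ∃ uu : α, ∀ vv : α, altQ P m (acc ++ [uu, vv]) := hQ
    obtain ⟨uu, hu⟩ := hQ'
    set vv := W (fun i' => (acc ++ [uu]).getD (2 * i') d) r with hvv
    obtain ⟨cl, hpre, hclen, hPc, hcond⟩ :=
      ih (r + 1) (acc ++ [uu, vv]) (by simp; omega) (hu vv)
    have hpre0 : acc <+: cl := (List.prefix_append acc [uu, vv]).trans hpre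
    refine ⟨cl, hpre0, by omega, hPc, ?_⟩
    intro i hi1 hi2
    by_cases hir : i = r
    · subst hir
      have h1 : cl.getD (2 * i + 1) d = vv := by
        rw [getD_of_prefix hpre d (by simp; omega)]
        have : 2 * i + 1 = acc.length + 1 := by omega
        rw [this, List.getD_append_right] <;> simp
      rw [h1, hvv]
      apply (hWdep _ _ i _).symm
      intro i' hi'
      have hl1 : 2 * i' < acc.length := by omega
      rw [getD_of_prefix hpre0 d hl1,
        getD_of_prefix (List.prefix_append acc [uu]) d hl1]
    · exact hcond i (by omega) (by omega)

lemma isWord_append {N : ℕ} {α γ : List ℕ} (h1 : IsWord N α) (h2 : IsWord N γ) :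
    IsWord N (α ++ γ) := by
  intro j hj
  rcases List.mem_append.mp hj with hj | hj
  · exact h1 j hj
  · exact h2 j hj

lemma isWord_single {N j : ℕ} (h1 : 1 ≤ j) (h2 : j ≤ N) : IsWord N [j] := by
  intro x hx
  simp at hx
  subst hx
  exact ⟨h1, h2⟩

/-- **Lemma.**  If `(N = 2k, n, sᵢ, tᵢ, L_α, R_α)` witness the BFC Mal'cev
condition for the variety, `A` is in the variety and `A ⊨ Φ₂(a,b,c,c)`, then
`a = b`. -/
theorem statement13 {S : Sig} (E : Set (Tm S ℕ × Tm S ℕ)) (k n : ℕ)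
    (s t : ∀ j : Fin n, Tm S (Fin (4 + 2 * j.val)))
    (L R : List ℕ → Tm S (Fin (4 + 2 * n)))
    (hW : MalcevWitness E k n s t L R)
    (A : Alg S) (hA : InV E A) (a b c : A.carrier)
    (h : Phi2 A k n L R a b c c) : a = b := by
  obtain ⟨hk, hn, hmain⟩ := hW
  classical
  obtain ⟨ac, hpre, haclen, hPac, hys⟩ :=
    altQ_extract
      (fun acc => ∀ m, 1 ≤ m → m ≤ k →
        Psi A (2 * k) L R (2 * m - 1)
          (tup a b c c (fun i => acc.getD (2 * i) a) (fun i => acc.getD (2 * i + 1) a)))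
      a (fun xs i => recRowY A s a b c c xs n i)
      (fun xs xs' i hag => recRowY_dep A s a b c c xs xs' i hag) n 0 [] rfl h
  set xsf : ℕ → A.carrier := fun i => ac.getD (2 * i) a with hxsf
  set ysR : ℕ → A.carrier := recRowY A s a b c c xsf n with hysR
  set X : ℕ → A.carrier := tup a b c c xsf ysR with hX
  have htup : tup a b c c (fun i => ac.getD (2 * i) a) (fun i => ac.getD (2 * i + 1) a) = X := by
    rw [hX]
    apply tup_congr
    · intro i; rfl
    · intro i
      by_cases hi : i < n
      · exact hys i (by omega) (by omega)
      · rw [List.getD_eq_default _ _ (by omega), hysR,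
          recRowY_ge A s a b c c xsf n i (by omega)]
  have hPsi : ∀ m, 1 ≤ m → m ≤ k → Psi A (2 * k) L R (2 * m - 1) X := by
    intro m hm1 hm2
    have := hPac m hm1 hm2
    rwa [htup] at this
  have H := hmain A hA a b c c xsf ysR
  have hXr : rhoT A s a b c c xsf ysR = X := by rw [hX, hysR]; rfl
  have hXt : tup a b c c xsf ysR = X := by rw [hX]
  rw [hXr, hXt] at H
  obtain ⟨h2k, hxL, hyR, hLeps, hRchain, hRN, heven, _hodd⟩ := H
  -- main downward induction on 2k - |α|
  have main : ∀ d : ℕ, ∀ α : List ℕ, IsWord (2 * k) α → α ≠ [] → α.length ≤ 2 * k →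
      2 * k - α.length ≤ d → evalAt A (L α) X = evalAt A (R α) X := by
    intro d
    induction d with
    | zero =>
      intro α hw hne hle hd
      exact (h2k α hw (by omega)).1
    | succ d ih =>
      intro α hw hne hle hd
      by_cases hfull : α.length = 2 * k
      · exact (h2k α hw hfull).1
      · have hlt : α.length < 2 * k := by omega
        have hpos : 0 < α.length := List.length_pos_iff.mpr hne
        by_cases hpar : α.length % 2 = 1
        · -- odd length: use Psi
          have hm1 : 1 ≤ (α.length + 1) / 2 := by omega
          have hmk : (α.length + 1) / 2 ≤ k := by omega
          apply hPsi ((α.length + 1) / 2) hm1 hmk α hw (by omega)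
          intro γ hγw hγne hγle
          have hγpos : 0 < γ.length := List.length_pos_iff.mpr hγne
          apply ih (α ++ γ) (isWord_append hw hγw)
          · intro hnil
            exact hγne (List.append_eq_nil_iff.mp hnil).2
          · exact hγle
          · rw [List.length_append] at hγle ⊢
            omega
        · -- even length: use the ρ-chain
          have hcc := heven α hw hne hlt (by omega)
          obtain ⟨c1, c2, c3, _, _, _⟩ := hcc
          have hstep : ∀ j, 1 ≤ j → j ≤ k → evalAt A (L α) X = evalAt A (R (α ++ [j])) X := by
            intro j hj1
            induction j, hj1 using Nat.le_induction with
            | base =>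
              intro _
              refine c1.trans (ih (α ++ [1]) (isWord_append hw (isWord_single le_rfl (by omega)))
                (by simp) ?_ ?_) <;> simp <;> omega
            | succ j hj ihj =>
              intro hjk
              calc evalAt A (L α) X = evalAt A (R (α ++ [j])) X := ihj (by omega)
                _ = evalAt A (L (α ++ [j + 1])) X := c2 j hj (by omega)
                _ = evalAt A (R (α ++ [j + 1])) X := by
                    refine ih (α ++ [j + 1])
                      (isWord_append hw (isWord_single (by omega) (by omega)))
                      (by simp) ?_ ?_ <;> simp <;> omega
          exact (hstep k hk le_rfl).trans c3
  -- wrap up : chain over the empty word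
  have hchain : ∀ j, 1 ≤ j → j ≤ 2 * k → evalAt A (L []) X = evalAt A (R [j]) X := by
    intro j hj1
    induction j, hj1 using Nat.le_induction with
    | base =>
      intro _
      refine hLeps.trans (main (2 * k) [1] (isWord_single le_rfl (by omega))
        (by simp) ?_ ?_) <;> simp <;> omega
    | succ j hj ihj =>
      intro hjk
      calc evalAt A (L []) X = evalAt A (R [j]) X := ihj (by omega)
        _ = evalAt A (L [j + 1]) X := hRchain j hj (by omega)
        _ = evalAt A (R [j + 1]) X := by
            refine main (2 * k) [j + 1] (isWord_single (by omega) (by omega))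
              (by simp) ?_ ?_ <;> simp <;> omega
  have hfin : evalAt A (L []) X = evalAt A (R []) X :=
    (hchain (2 * k) (by omega) le_rfl).trans hRN
  rw [hxL, hyR]
  exact hfin

end UA
end
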